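/- Let l ≥ 3 be an integer and let H be a 3-graph containing no 3-uniform loose cycle of length l, with average degree d = 3|E(H)|/|V(H)|. Then there exists an extender (X,Y) in H with |X| ≥ d/(24 l^2). -/

import Mathlib

open Finset

section Defs

variable {α : Type*} [DecidableEq α]

/-- `e 0, …, e (l-1)` form a loose cycle of length `l`: distinct edges, each of size
at least 2, cyclically consecutive edges meet in exactly one vertex, all other pairs
of edges are disjoint. -/
def IsLooseCycleOn (l : ℕ) (e : ℕ → Finset α) : Prop :=
  (∀ i < l, ∀ j < l, i ≠ j → e i ≠ e j) ∧
  (∀ i < l, 2 ≤ (e i).card) ∧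
  (∀ i < l, (e i ∩ e ((i + 1) % l)).card = 1) ∧
  (∀ i < l, ∀ j < l, j ≠ i → j ≠ (i + 1) % l → i ≠ (j + 1) % l → e i ∩ e j = ∅)

/-- A hypergraph with edge set `E` contains a loose cycle of length `l`. -/
def ContainsLooseCycle (l : ℕ) (E : Set (Finset α)) : Prop :=
  ∃ e : ℕ → Finset α, IsLooseCycleOn l e ∧ ∀ i < l, e i ∈ E

/-- A hypergraph with edge set `E` contains an `r`-uniform loose cycle of length `l`. -/
def ContainsUniformLooseCycle (r l : ℕ) (E : Set (Finset α)) : Prop :=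
  ∃ e : ℕ → Finset α, IsLooseCycleOn l e ∧ (∀ i < l, (e i).card = r) ∧ ∀ i < l, e i ∈ E

/-- `f 0, …, f (k-1)` form a simple path of length `k`: each edge has size at least 2,
consecutive edges meet, non-consecutive edges are disjoint, and any two distinct
edges meet in at most one vertex. -/
def IsSimplePathOn (k : ℕ) (f : ℕ → Finset α) : Prop :=
  (∀ i < k, 2 ≤ (f i).card) ∧
  (∀ i, i + 1 < k → (f i ∩ f (i + 1)).Nonempty) ∧
  (∀ i < k, ∀ j < k, i < j → j ≠ i + 1 → f i ∩ f j = ∅) ∧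
  (∀ i < k, ∀ j < k, i ≠ j → (f i ∩ f j).card ≤ 1)

/-- The simple path `f 0, …, f (k-1)` joins `a` to `b`. -/
def SimplePathJoins (k : ℕ) (f : ℕ → Finset α) (a b : α) : Prop :=
  IsSimplePathOn k f ∧ a ∈ f 0 ∧ b ∈ f (k - 1) ∧
  (2 ≤ k → a ∉ f 1 ∧ b ∉ f (k - 2))

/-- `p` is a heavy pair of the 3-graph `H` (with respect to the parameter `l`):
it is a pair of vertices contained in at least `2l-2` edges of `H`. -/
def PairHeavy (l : ℕ) (H : Finset (Finset α)) (p : Finset α) : Prop :=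
  p.card = 2 ∧ 2 * l - 2 ≤ (H.filter fun e => p ⊆ e).card

/-- `e` is a light edge of the 3-graph `H`: an edge of `H` containing no heavy pair. -/
def EdgeLight (l : ℕ) (H : Finset (Finset α)) (e : Finset α) : Prop :=
  e ∈ H ∧ ∀ p ⊆ e, ¬ PairHeavy l H p

/-- The reduced hypergraph `H*` of a 3-graph `H`: its edges are the light edges of `H`
together with the heavy pairs of `H`. -/
def Reduced (l : ℕ) (H : Finset (Finset α)) : Set (Finset α) :=
  {e | EdgeLight l H e ∨ PairHeavy l H e}

/-- `(X, Y)` is an extender in the 3-graph `H`. -/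
def IsExtender (l : ℕ) (H : Finset (Finset α)) (X Y : Finset α) : Prop :=
  Disjoint X Y ∧ Y.card ≤ 2 * X.card ∧
  ∀ u ∈ X, ∀ v ∈ X, u ≠ v → ∀ S : Finset α,
    Disjoint S ({u, v} ∪ Y) → S.card ≤ 2 * l - 5 →
      ∃ f : ℕ → Finset α, SimplePathJoins 2 f u v ∧ (∀ i < 2, f i ∈ H) ∧
        ∀ i < 2, Disjoint (f i) S

/-- `X` is an independent set of the hypergraph with edge set `E`. -/
def IndepIn (E : Set (Finset α)) (X : Finset α) : Prop := ∀ e ∈ E, ¬ e ⊆ X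

end Defs

/-!
Take an extender `(X, Y)` with `|X| = k` maximal, and call a pair of vertices fat if it lies in
at least `2l` edges. Two fat pairs `ut`, `u't` extend to a path `u t u'` avoiding any `2l - 5`
further vertices, and two edges meeting in one vertex form such a path. Hence the fat neighbours
of a vertex, one petal vertex from each edge of a sunflower, and the partners `u` of a vertex `c`
(those lying in an edge `cut` with `ut` fat) all yield extenders, so there are at most `k`, `k`
and `3k + 1` of them. The petals of a maximal sunflower at `v` meet every edge at `v`, which
bounds the degree of `v` by its fat codegrees plus `4lk`. An edge through a fat pair either also
contains a thin pair, and is charged to a partner, or is a triangle of the fat graph. The fat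
graph has no `l`-cycle, since one would expand greedily to a loose `l`-cycle of `H`; so deleting
edges in few triangles shows that it has at most `l - 3` triangles per edge. Altogether
`3|H| ≤ n l (43k + 4)`, which gives `k ≥ d / (24 l²)`.
-/

theorem Nat.add_one_mod_eq_or {i l : ℕ} (hi : i < l) :
    (i + 1) % l = i + 1 ∧ i + 1 < l ∨ (i + 1) % l = 0 ∧ i + 1 = l := by
  rcases (Nat.add_one_le_of_lt hi).lt_or_eq with h | h
  · exact Or.inl ⟨Nat.mod_eq_of_lt h, h⟩
  · exact Or.inr ⟨by rw [h, Nat.mod_self], h⟩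

theorem Set.InjOn.update_Iio {β : Type*} {w : ℕ → β} {n : ℕ} (hw : Set.InjOn w (Set.Iio n)) {x : β}
    (hx : ∀ i < n, w i ≠ x) : Set.InjOn (Function.update w n x) (Set.Iio (n + 1)) := by
  rw [← Order.succ_eq_add_one, Order.Iio_succ_eq_insert, Set.injOn_insert (by simp)]
  refine ⟨hw.congr fun i hi => (Function.update_of_ne (ne_of_lt hi) _ _).symm, ?_⟩
  rintro ⟨i, hi, h⟩
  rw [Function.update_self, Function.update_of_ne (ne_of_lt hi)] at h
  exact hx i hi h

section

variable {α : Type*} [DecidableEq α]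

theorem Finset.exists_eq_insert_insert_of_card_eq_three {e : Finset α} (he : #e = 3) {u v : α}
    (hu : u ∈ e) (hv : v ∈ e) (huv : u ≠ v) : ∃ w, w ≠ u ∧ w ≠ v ∧ e = {u, v, w} := by
  have hv' : v ∈ e.erase u := mem_erase.2 ⟨huv.symm, hv⟩
  obtain ⟨w, hw⟩ := card_eq_one.1 <| show #((e.erase u).erase v) = 1 by
    rw [card_erase_of_mem hv', card_erase_of_mem hu, he]
  have hw' : w ∈ (e.erase u).erase v := hw ▸ mem_singleton_self w
  refine ⟨w, ne_of_mem_erase (mem_of_mem_erase hw'), ne_of_mem_erase hw', ?_⟩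
  rw [← insert_erase hu, ← insert_erase hv', hw]

theorem Finset.ne_of_card_insert_insert_eq_three {u v w : α} (h : #({u, v, w} : Finset α) = 3) :
    u ≠ v ∧ u ≠ w ∧ v ≠ w := by
  refine ⟨fun huv => ?_, fun huw => ?_, fun hvw => ?_⟩ <;> subst_vars <;> simp only [mem_insert, mem_singleton, true_or, or_true,
    insert_eq_of_mem] at h <;>
    exact (card_le_two.trans_lt (by norm_num)).ne h

theorem Finset.exists_maximal_pairwiseDisjoint {ι : Type*} (F : Finset ι)
    (φ : ι → Finset α) :
    ∃ C ⊆ F, (C : Set ι).PairwiseDisjoint φ ∧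
      ∀ f ∈ F, (φ f).Nonempty → ∃ e ∈ C, ¬Disjoint (φ f) (φ e) := by
  classical
  obtain ⟨C, hC, hmax⟩ := exists_max_image
    (F.powerset.filter fun C : Finset ι => (C : Set ι).PairwiseDisjoint φ) card ⟨∅, by simp⟩
  rw [mem_filter, mem_powerset] at hC
  refine ⟨C, hC.1, hC.2, fun f hf hne => ?_⟩
  by_contra! hdisj
  have hfC : f ∉ C := fun h => hne.ne_empty (disjoint_self.1 (hdisj f h))
  have := hmax (insert f C) <| mem_filter.2 ⟨mem_powerset.2 (insert_subset hf hC.1),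
    by rw [coe_insert]; exact hC.2.insert fun e he _ => hdisj e he⟩
  rw [card_insert_of_notMem hfC] at this
  omega

theorem exists_injOn_forall_mem_sdiff [Nonempty α] (L : ℕ → Finset α) (K : Finset α) (n : ℕ)
    (hL : ∀ i < n, #K + n ≤ #(L i)) :
    ∃ w : ℕ → α, Set.InjOn w (Set.Iio n) ∧ ∀ i < n, w i ∈ L i \ K := by
  induction n with
  | zero => exact ⟨fun _ => Classical.arbitrary α, by simp, by simp⟩
  | succ n ih =>
    obtain ⟨w, hw, hwL⟩ := ih fun i hi => by have := hL i (by omega); omega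
    obtain ⟨x, hxL, hx⟩ := exists_mem_notMem_of_card_lt_card (s := K ∪ (range n).image w)
      (t := L n) <| by
        have := card_union_le K ((range n).image w)
        have := card_image_le (s := range n) (f := w)
        have := hL n (by omega)
        simp only [card_range] at *
        omega
    simp only [mem_union, mem_image, mem_range, not_or, not_exists, not_and] at hx
    refine ⟨Function.update w n x, hw.update_Iio hx.2, fun i hi => ?_⟩
    rcases eq_or_ne i n with rfl | hin
    · simpa using ⟨hxL, hx.1⟩
    · rw [Function.update_of_ne hin]; exact hwL i (by omega)

section Graph

variable {Q : Finset (Finset α)}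

/-- For `m = 2` this only asks for the edge `{g 0, g 1}`; longer cycles are grown from it. -/
def IsCycleIn (Q : Finset (Finset α)) (m : ℕ) (g : ℕ → α) : Prop :=
  Set.InjOn g (Set.Iio m) ∧ ∀ i < m, {g i, g ((i + 1) % m)} ∈ Q

theorem IsCycleIn.mono {Q' : Finset (Finset α)} {m : ℕ} {g : ℕ → α} (hg : IsCycleIn Q m g)
    (hQ : Q ⊆ Q') : IsCycleIn Q' m g :=
  ⟨hg.1, fun i hi => hQ (hg.2 i hi)⟩

theorem ne_of_pair_mem (hQ : ∀ q ∈ Q, #q = 2) {a b : α} (h : {a, b} ∈ Q) : a ≠ b := by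
  rintro rfl; simpa using hQ _ h

variable [Fintype α]

def commonNbrs (Q : Finset (Finset α)) (a b : α) : Finset α := {w | {a, w} ∈ Q ∧ {b, w} ∈ Q}

def triangles (Q : Finset (Finset α)) : Finset (Finset α) := {t | #t = 3 ∧ t.powersetCard 2 ⊆ Q}

theorem IsCycleIn.exists_succ (hQ : ∀ q ∈ Q, #q = 2) {m : ℕ} (hm : 2 ≤ m) {g : ℕ → α}
    (hg : IsCycleIn Q m g) (hcommon : m - 2 < #(commonNbrs Q (g (m - 1)) (g 0))) :
    ∃ g', IsCycleIn Q (m + 1) g' := by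
  obtain ⟨w, hw, hwK⟩ := exists_mem_notMem_of_card_lt_card ((card_image_le (s := Ioo 0 (m - 1))
    (f := g)).trans_lt (by rw [Nat.card_Ioo]; omega))
  simp only [commonNbrs, mem_filter, mem_univ, true_and] at hw
  have hwg : ∀ i < m, g i ≠ w := by
    rintro i hi rfl
    rcases Nat.eq_zero_or_pos i with rfl | hi0
    · exact ne_of_pair_mem hQ hw.2 rfl
    rcases eq_or_ne i (m - 1) with rfl | hi1
    · exact ne_of_pair_mem hQ hw.1 rfl
    · exact hwK (mem_image_of_mem g (mem_Ioo.2 ⟨hi0, by omega⟩))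
  refine ⟨Function.update g m w, hg.1.update_Iio hwg, fun i hi => ?_⟩
  rcases Nat.lt_or_ge (i + 1) m with h | h
  · rw [Nat.mod_eq_of_lt (by omega : i + 1 < m + 1), Function.update_of_ne (show i ≠ m by omega),
      Function.update_of_ne (show i + 1 ≠ m by omega)]
    simpa [Nat.mod_eq_of_lt h] using hg.2 i (by omega)
  rcases (show i = m - 1 ∨ i = m by omega) with rfl | rfl
  · rw [Nat.sub_add_cancel (by omega), Nat.mod_eq_of_lt (by omega),
      Function.update_of_ne (show m - 1 ≠ m by omega), Function.update_self]
    exact hw.1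
  · rw [Nat.mod_self, Function.update_self, Function.update_of_ne (show 0 ≠ i by omega), pair_comm]
    exact hw.2

theorem exists_isCycleIn (hQ : ∀ q ∈ Q, #q = 2) (hne : Q.Nonempty) {l : ℕ}
    (hrich : ∀ a b, {a, b} ∈ Q → l - 2 ≤ #(commonNbrs Q a b)) :
    ∀ m, 2 ≤ m → m ≤ l → ∃ g, IsCycleIn Q m g := by
  intro m hm
  induction m, hm using Nat.le_induction with
  | base =>
    intro _
    obtain ⟨q, hq⟩ := hne
    obtain ⟨a, b, hab, rfl⟩ := card_eq_two.1 (hQ q hq)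
    refine ⟨fun i => if i = 0 then a else b, ?_, ?_⟩
    · intro i hi j hj hij
      simp only [Set.mem_Iio] at hi hj
      interval_cases i <;> interval_cases j <;> simp_all
    · intro i hi
      interval_cases i
      · simpa using hq
      · simpa [pair_comm] using hq
  | succ m hm ih =>
    intro hml
    obtain ⟨g, hg⟩ := ih (by omega)
    refine hg.exists_succ hQ hm ((show m - 2 < l - 2 by omega).trans_le (hrich _ _ ?_))
    simpa [Nat.sub_add_cancel (by omega : 1 ≤ m)] using hg.2 (m - 1) (by omega)

theorem triangles_empty : triangles (∅ : Finset (Finset α)) = ∅ := by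
  ext t
  simp only [triangles, mem_filter, mem_univ, true_and, subset_empty, powersetCard_eq_empty,
    notMem_empty, iff_false, not_and]
  omega

theorem triangles_subset_erase_union {a b : α} (hab : a ≠ b) :
    triangles Q ⊆ triangles (Q.erase {a, b}) ∪ (commonNbrs Q a b).image fun w => {a, b, w} := by
  intro t ht
  simp only [triangles, mem_filter, mem_univ, true_and] at ht
  rw [mem_union]
  by_cases hsub : {a, b} ⊆ t
  · right
    obtain ⟨w, hwa, hwb, rfl⟩ := exists_eq_insert_insert_of_card_eq_three ht.1
      (hsub (by simp)) (hsub (by simp)) hab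
    have hpair : ∀ x ∈ ({a, b, w} : Finset α), x ≠ w → {x, w} ∈ Q := fun x hx hxw =>
      ht.2 (mem_powersetCard.2 ⟨by simp [insert_subset_iff, hx], card_pair hxw⟩)
    exact mem_image.2 ⟨w, by simp [commonNbrs, hpair a (by simp) hwa.symm,
      hpair b (by simp) hwb.symm], rfl⟩
  · left
    simp only [triangles, mem_filter, mem_univ, true_and]
    refine ⟨ht.1, fun p hp => mem_erase.2 ⟨?_, ht.2 hp⟩⟩
    rintro rfl
    exact hsub (mem_powersetCard.1 hp).1

/-- Delete an edge lying in fewer than `l - 2` triangles; if there is none, a cycle can be grown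
to length `l`. -/
theorem card_triangles_le (hQ : ∀ q ∈ Q, #q = 2) {l : ℕ} (hl : 2 ≤ l)
    (hfree : ∀ g, ¬IsCycleIn Q l g) : #(triangles Q) ≤ (l - 3) * #Q := by
  induction Q using Finset.strongInduction with
  | H Q ih =>
  by_cases hpoor : ∃ a b, {a, b} ∈ Q ∧ #(commonNbrs Q a b) < l - 2
  · obtain ⟨a, b, hab, hpoor⟩ := hpoor
    have hQ' : #Q = #(Q.erase {a, b}) + 1 := (card_erase_add_one hab).symm
    have ih' := ih _ (erase_ssubset hab) (fun q hq => hQ q (mem_of_mem_erase hq))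
      (fun g hg => hfree g (hg.mono (erase_subset _ _)))
    calc #(triangles Q)
        ≤ #(triangles (Q.erase {a, b})) + #(commonNbrs Q a b) :=
          (card_le_card (triangles_subset_erase_union (ne_of_pair_mem hQ hab))).trans
            ((card_union_le _ _).trans (Nat.add_le_add_left card_image_le _))
      _ ≤ (l - 3) * #(Q.erase {a, b}) + (l - 3) := by omega
      _ = (l - 3) * #Q := by rw [hQ', mul_add_one]
  · simp only [not_exists, not_and, not_lt] at hpoor
    rcases Q.eq_empty_or_nonempty with rfl | hne
    · simp [triangles_empty]
    · obtain ⟨g, hg⟩ := exists_isCycleIn hQ hne hpoor l hl le_rfl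
      exact absurd hg (hfree g)

end Graph

theorem isLooseCycleOn_of_injOn {l : ℕ} (hl : 3 ≤ l) {g w : ℕ → α} (hg : Set.InjOn g (Set.Iio l))
    (hw : Set.InjOn w (Set.Iio l)) (hgw : ∀ i < l, ∀ j < l, w i ≠ g j) :
    IsLooseCycleOn l (fun i => {g i, g ((i + 1) % l), w i}) := by
  have hg' : ∀ i < l, ∀ j < l, g i = g j → i = j := fun i hi j hj h => hg hi hj h
  have hw' : ∀ i < l, ∀ j < l, w i = w j → i = j := fun i hi j hj h => hw hi hj h
  have hsucc : ∀ i < l, (i + 1) % l < l ∧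
      ((i + 1) % l = i + 1 ∧ i + 1 < l ∨ (i + 1) % l = 0 ∧ i + 1 = l) := fun i hi => ⟨Nat.mod_lt _ (by omega), Nat.add_one_mod_eq_or hi⟩
  refine ⟨?_, ?_, ?_, ?_⟩
  · intro i hi j hj hij h
    have hwi : w i ∈ ({g j, g ((j + 1) % l), w j} : Finset α) := by
      simp only at h; rw [← h]; simp
    have := hsucc j hj
    simp only [mem_insert, mem_singleton] at hwi
    grind
  · intro i hi
    exact one_lt_card.2 ⟨g i, by simp, w i, by simp, (hgw i hi i hi).symm⟩
  · intro i hi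
    rw [card_eq_one]
    refine ⟨g ((i + 1) % l), ?_⟩
    have := hsucc i hi
    have := hsucc ((i + 1) % l) (hsucc i hi).1
    ext x; simp only [mem_inter, mem_insert, mem_singleton]
    grind
  · intro i hi j hj hji hji' hij'
    have := hsucc i hi
    have := hsucc j hj
    ext x; simp only [mem_inter, mem_insert, mem_singleton, notMem_empty, iff_false]
    grind

section Extenders

variable {H : Finset (Finset α)} {S : Finset α} {u v : α} {l k : ℕ}

def JoinedAvoiding (H : Finset (Finset α)) (S : Finset α) (u v : α) : Prop :=
  ∃ f : ℕ → Finset α, SimplePathJoins 2 f u v ∧ (∀ i < 2, f i ∈ H) ∧ ∀ i < 2, Disjoint (f i) S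

theorem simplePathJoins_two {e₀ e₁ : Finset α} {z : α} (hz : e₀ ∩ e₁ = {z}) (hu : u ∈ e₀)
    (hu₁ : u ∉ e₁) (hv : v ∈ e₁) (hv₀ : v ∉ e₀) :
    SimplePathJoins 2 (fun i => if i = 0 then e₀ else e₁) u v := by
  have hz₀ : z ∈ e₀ := (mem_inter.1 (hz ▸ mem_singleton_self z)).1
  have hz₁ : z ∈ e₁ := (mem_inter.1 (hz ▸ mem_singleton_self z)).2
  have hcard₀ : 2 ≤ #e₀ := one_lt_card.2 ⟨u, hu, z, hz₀, by rintro rfl; exact hu₁ hz₁⟩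
  have hcard₁ : 2 ≤ #e₁ := one_lt_card.2 ⟨v, hv, z, hz₁, by rintro rfl; exact hv₀ hz₀⟩
  refine ⟨⟨?_, ?_, ?_, ?_⟩, hu, hv, fun _ => ⟨hu₁, hv₀⟩⟩
  · intro i _; dsimp only; split_ifs <;> assumption
  · intro i hi
    obtain rfl : i = 0 := by omega
    simp [hz]
  · intro i _ j _ hij hj; omega
  · intro i hi j hj hij
    have : (i = 0 ∧ j = 1) ∨ (i = 1 ∧ j = 0) := by omega
    rcases this with ⟨rfl, rfl⟩ | ⟨rfl, rfl⟩ <;> simp [hz, inter_comm e₁]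

theorem joinedAvoiding_of_inter_eq_singleton {e₀ e₁ : Finset α} {z : α} (h₀ : e₀ ∈ H) (h₁ : e₁ ∈ H)
    (hz : e₀ ∩ e₁ = {z}) (hu : u ∈ e₀) (hu₁ : u ∉ e₁) (hv : v ∈ e₁) (hv₀ : v ∉ e₀)
    (hS₀ : Disjoint e₀ S) (hS₁ : Disjoint e₁ S) : JoinedAvoiding H S u v :=
  ⟨_, simplePathJoins_two hz hu hu₁ hv hv₀, fun i _ => by split_ifs <;> assumption,
    fun i _ => by split_ifs <;> assumption⟩

theorem joinedAvoiding_of_triples (h3 : ∀ e ∈ H, #e = 3) {z a b : α} (h₀ : {z, u, a} ∈ H)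
    (h₁ : {z, v, b} ∈ H) (hd : Disjoint ({u, a} : Finset α) {v, b})
    (hS₀ : Disjoint ({z, u, a} : Finset α) S) (hS₁ : Disjoint ({z, v, b} : Finset α) S) :
    JoinedAvoiding H S u v := by
  have := ne_of_card_insert_insert_eq_three (h3 _ h₀)
  have := ne_of_card_insert_insert_eq_three (h3 _ h₁)
  simp only [disjoint_insert_left, disjoint_insert_right, disjoint_singleton, mem_insert,
    mem_singleton, not_or] at hd
  refine joinedAvoiding_of_inter_eq_singleton h₀ h₁ (z := z) ?_ (by simp) ?_ (by simp) ?_ hS₀ hS₁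
  · ext x; simp only [mem_inter, mem_insert, mem_singleton]; grind
  all_goals simp only [mem_insert, mem_singleton]; grind

theorem isExtender_of_subsingleton {X : Finset α} (hX : (X : Set α).Subsingleton) :
    IsExtender l H X ∅ :=
  ⟨disjoint_empty_right X, by simp, fun _ hu _ hv huv => absurd (hX hu hv) huv⟩

theorem exists_isExtender_of_sunflower (h3 : ∀ e ∈ H, #e = 3) {v : α} {C : Finset (Finset α)}
    (hCH : C ⊆ H) (hCv : ∀ e ∈ C, v ∈ e) (hC : (C : Set (Finset α)).PairwiseDisjoint (·.erase v))
    (hne : C.Nonempty) : ∃ X Y, IsExtender l H X Y ∧ #X = #C := by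
  have hpetal : ∀ e ∈ C, ∃ a b, a ≠ b ∧ e.erase v = {a, b} := fun e he =>
    card_eq_two.1 (by rw [card_erase_of_mem (hCv e he), h3 e (hCH he)])
  have : Nonempty α := ⟨v⟩
  choose! A B hAB hpet using hpetal
  have hedge : ∀ e ∈ C, {v, A e, B e} ∈ H := fun e he => by
    rw [← hpet e he, insert_erase (hCv e he)]; exact hCH he
  have hAv : ∀ e ∈ C, A e ≠ v := fun e he => ne_of_mem_erase (hpet e he ▸ mem_insert_self _ _)
  have hsep : ∀ e ∈ C, ∀ e' ∈ C, e ≠ e' → Disjoint ({A e, B e} : Finset α) {A e', B e'} :=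
    fun e he e' he' h => hpet e he ▸ hpet e' he' ▸ hC he he' h
  have hinj : Set.InjOn A C := fun e he e' he' h => by
    by_contra hne
    exact disjoint_left.1 (hsep e he e' he' hne) (mem_insert_self _ _) (h ▸ mem_insert_self _ _)
  refine ⟨C.image A, insert v (C.image B), ⟨?_, ?_, ?_⟩, card_image_of_injOn hinj⟩
  · rw [disjoint_left]
    intro x hx
    obtain ⟨e, he, rfl⟩ := mem_image.1 hx
    rw [mem_insert, mem_image]
    rintro (h | ⟨e', he', hBA⟩)
    · exact hAv e he h
    rcases eq_or_ne e' e with rfl | hne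
    · exact hAB e' he hBA.symm
    · exact disjoint_left.1 (hsep e he e' he' hne.symm) (mem_insert_self _ _) (by simp [← hBA])
  · have := card_image_le (s := C) (f := B)
    have := card_insert_le v (C.image B)
    have := hne.card_pos
    rw [card_image_of_injOn hinj]
    omega
  · intro u hu u' hu' huu' S hS _
    obtain ⟨e, he, rfl⟩ := mem_image.1 hu
    obtain ⟨e', he', rfl⟩ := mem_image.1 hu'
    have hS' : ∀ T ⊆ {A e, A e'} ∪ insert v (C.image B), Disjoint T S := fun T hT =>
      hS.symm.mono_left hT
    refine joinedAvoiding_of_triples h3 (hedge e he) (hedge e' he')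
      (hsep e he e' he' fun h => huu' (h ▸ rfl)) (hS' _ ?_) (hS' _ ?_) <;>
      simp only [insert_subset_iff, singleton_subset_iff, mem_union, mem_insert, mem_singleton,
        true_or, or_true, mem_image_of_mem B he, mem_image_of_mem B he', and_self]

/-- `P` is the set of petal vertices of a maximal sunflower with kernel `v` among the edges of
`F`, which has at most `k` petals. -/
theorem exists_petal_cover (h3 : ∀ e ∈ H, #e = 3) (hk : ∀ X Y, IsExtender l H X Y → #X ≤ k)
    {v : α} {F : Finset (Finset α)} (hF : F ⊆ H) (hFv : ∀ f ∈ F, v ∈ f) :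
    ∃ P : Finset α, #P ≤ 2 * k ∧ ∀ f ∈ F, ∃ x ∈ P, x ∈ f ∧ x ≠ v := by
  obtain ⟨C, hCF, hC, hmax⟩ := F.exists_maximal_pairwiseDisjoint (·.erase v)
  have hpetal : ∀ e ∈ F, #(e.erase v) = 2 := fun e he => by
    rw [card_erase_of_mem (hFv e he), h3 e (hF he)]
  have hCk : #C ≤ k := by
    rcases C.eq_empty_or_nonempty with h | h
    · simp [h]
    · obtain ⟨X, Y, hXY, hX⟩ := exists_isExtender_of_sunflower h3 (hCF.trans hF)
        (fun e he => hFv e (hCF he)) hC h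
      exact hX ▸ hk X Y hXY
  refine ⟨C.biUnion (·.erase v), ?_, fun f hf => ?_⟩
  · calc #(C.biUnion (·.erase v)) ≤ ∑ e ∈ C, #(e.erase v) := card_biUnion_le
      _ = 2 * #C := by rw [sum_congr rfl fun e he => hpetal e (hCF he), sum_const, smul_eq_mul,
          mul_comm]
      _ ≤ 2 * k := by omega
  · obtain ⟨e, he, hfe⟩ := hmax f hf (card_pos.1 (by rw [hpetal f hf]; omega))
    obtain ⟨x, hxf, hxe⟩ := not_disjoint_iff.1 hfe
    exact ⟨x, mem_biUnion.2 ⟨e, he, hxe⟩, mem_of_mem_erase hxf, ne_of_mem_erase hxf⟩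

end Extenders

section ThreeGraph

variable [Fintype α] {H : Finset (Finset α)} {l k : ℕ}

/-- In a 3-graph and for `u ≠ v`, the number of edges containing `u` and `v`. -/
def codegree (H : Finset (Finset α)) (u v : α) : ℕ := #{w | {u, v, w} ∈ H}

theorem codegree_comm (H : Finset (Finset α)) (u v : α) : codegree H u v = codegree H v u := by
  simp only [codegree, insert_comm u v]

theorem codegree_self (h3 : ∀ e ∈ H, #e = 3) (u : α) : codegree H u u = 0 := by
  rw [codegree, card_eq_zero, filter_eq_empty_iff]
  intro w _ hw
  have := h3 _ hw
  simp only [insert_eq_of_mem, mem_insert_self] at this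
  exact (card_le_two.trans_lt (by norm_num)).ne this

def fatNbrs (l : ℕ) (H : Finset (Finset α)) (v : α) : Finset α := {x | 2 * l ≤ codegree H v x}

theorem mem_fatNbrs_comm {u v : α} : u ∈ fatNbrs l H v ↔ v ∈ fatNbrs l H u := by
  simp [fatNbrs, codegree_comm H u v]

theorem notMem_fatNbrs_self (h3 : ∀ e ∈ H, #e = 3) (hl : 0 < l) (v : α) : v ∉ fatNbrs l H v := by
  simp only [fatNbrs, mem_filter_univ, codegree_self h3, not_le]; omega

theorem joinedAvoiding_of_fat (h3 : ∀ e ∈ H, #e = 3) {S : Finset α} {t u v : α}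
    (hu : u ∈ fatNbrs l H t) (hv : v ∈ fatNbrs l H t) (huv : u ≠ v) (hS : #S + 3 ≤ 2 * l)
    (huS : u ∉ S) (hvS : v ∉ S) (htS : t ∉ S) : JoinedAvoiding H S u v := by
  simp only [fatNbrs, mem_filter_univ] at hu hv
  rw [codegree] at hu hv
  obtain ⟨a, ha, haS⟩ := exists_mem_notMem_of_card_lt_card <|
    (show #(insert v S) < 2 * l by have := card_insert_le v S; omega).trans_le hu
  obtain ⟨b, hb, hbS⟩ := exists_mem_notMem_of_card_lt_card <|
    (show #(insert u (insert a S)) < 2 * l by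
      have := card_insert_le u (insert a S); have := card_insert_le a S; omega).trans_le hv
  simp only [mem_filter_univ, mem_insert, not_or] at ha hb haS hbS
  refine joinedAvoiding_of_triples h3 ha hb ?_ ?_ ?_ <;>
    simp only [disjoint_insert_left, disjoint_insert_right, disjoint_singleton_left,
      disjoint_singleton_right, mem_insert, mem_singleton, not_or] <;> grind

theorem isExtender_fatNbrs (hl : 3 ≤ l) (h3 : ∀ e ∈ H, #e = 3) {v : α}
    (hne : (fatNbrs l H v).Nonempty) : IsExtender l H (fatNbrs l H v) {v} := by
  refine ⟨disjoint_singleton_right.2 (notMem_fatNbrs_self h3 (by omega) v),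
    by have := hne.card_pos; simp only [card_singleton]; omega,
    fun u hu u' hu' huu' S hS hScard => ?_⟩
  simp only [disjoint_union_right, disjoint_insert_right, disjoint_singleton_right] at hS
  exact joinedAvoiding_of_fat h3 hu hu' huu' (by omega) hS.1.1 hS.1.2 hS.2

theorem isExtender_of_forall_exists_fat (hl : 3 ≤ l) (h3 : ∀ e ∈ H, #e = 3) {c : α}
    {X P : Finset α} (hXP : Disjoint X (insert c P))
    (hX : ∀ u ∈ X, ∃ t ∈ P, {c, u, t} ∈ H ∧ t ∈ fatNbrs l H u)
    (hcard : #(insert c P) ≤ 2 * #X) : IsExtender l H X (insert c P) := by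
  refine ⟨hXP, hcard, fun u hu u' hu' huu' S hS hScard => ?_⟩
  obtain ⟨t, htP, hut, ht⟩ := hX u hu
  obtain ⟨t', ht'P, hut', ht'⟩ := hX u' hu'
  have hS' : ∀ T ⊆ {u, u'} ∪ insert c P, Disjoint T S := fun T hT => hS.symm.mono_left hT
  have hnotP : ∀ x ∈ X, x ∉ P := fun x hx hxP =>
    disjoint_left.1 hXP hx (mem_insert_of_mem hxP)
  rcases eq_or_ne t t' with rfl | htt'
  · have hS'' := hS' {u, u', t} (by simp [insert_subset_iff, htP])
    simp only [disjoint_insert_left, disjoint_singleton_left] at hS''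
    exact joinedAvoiding_of_fat h3 (mem_fatNbrs_comm.1 ht) (mem_fatNbrs_comm.1 ht') huu'
      (by omega) hS''.1 hS''.2.1 hS''.2.2
  · have := hnotP u hu
    have := hnotP u' hu'
    refine joinedAvoiding_of_triples h3 hut hut' ?_ (hS' _ ?_) (hS' _ ?_)
    · simp only [disjoint_insert_left, disjoint_singleton_left, mem_insert, mem_singleton]
      grind
    all_goals simp [insert_subset_iff, htP, ht'P]

theorem card_fatNbrs_le (hl : 3 ≤ l) (h3 : ∀ e ∈ H, #e = 3)
    (hk : ∀ X Y, IsExtender l H X Y → #X ≤ k) (v : α) : #(fatNbrs l H v) ≤ k := by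
  rcases (fatNbrs l H v).eq_empty_or_nonempty with h | h
  · simp [h]
  · exact hk _ _ (isExtender_fatNbrs hl h3 h)

theorem card_filter_mem_le_sum_codegree (h3 : ∀ e ∈ H, #e = 3) (hk : ∀ X Y, IsExtender l H X Y → #X ≤ k)
    (v : α) : #{e ∈ H | v ∈ e} ≤ ∑ x ∈ fatNbrs l H v, codegree H v x + 4 * l * k := by
  obtain ⟨P, hP, hcover⟩ := exists_petal_cover h3 hk (F := {e ∈ H | v ∈ e})
    (filter_subset _ H) (fun f hf => (mem_filter.1 hf).2)
  have hsub : {e ∈ H | v ∈ e} ⊆ P.biUnion fun x =>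
      ({w | {v, x, w} ∈ H} : Finset α).image fun w => {v, x, w} := by
    intro f hf
    obtain ⟨hfH, hvf⟩ := mem_filter.1 hf
    obtain ⟨x, hxP, hxf, hxv⟩ := hcover f hf
    obtain ⟨w, -, -, rfl⟩ := exists_eq_insert_insert_of_card_eq_three (h3 f hfH) hvf hxf hxv.symm
    exact mem_biUnion.2 ⟨x, hxP, mem_image.2 ⟨w, by simpa using hfH, rfl⟩⟩
  have hthin : ∀ x ∉ fatNbrs l H v, codegree H v x ≤ 2 * l := fun x hx => by
    simp only [fatNbrs, mem_filter_univ] at hx; omega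
  calc #{e ∈ H | v ∈ e}
      ≤ ∑ x ∈ P, codegree H v x :=
        (card_le_card hsub).trans (card_biUnion_le.trans (sum_le_sum fun x _ => card_image_le))
    _ = ∑ x ∈ P with x ∈ fatNbrs l H v, codegree H v x +
          ∑ x ∈ P with x ∉ fatNbrs l H v, codegree H v x :=
        (sum_filter_add_sum_filter_not _ _ _).symm
    _ ≤ ∑ x ∈ fatNbrs l H v, codegree H v x + ∑ x ∈ P, 2 * l := by
        gcongr
        · exact fun x hx => (mem_filter.1 hx).2
        · exact (sum_le_sum fun x hx => hthin x (mem_filter.1 hx).2).trans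
            (sum_le_sum_of_subset (filter_subset _ _))
    _ ≤ ∑ x ∈ fatNbrs l H v, codegree H v x + 4 * l * k := by
        rw [sum_const, smul_eq_mul]; nlinarith

def partners (l : ℕ) (H : Finset (Finset α)) (c : α) : Finset α :=
  {u | ∃ t, {c, u, t} ∈ H ∧ t ∈ fatNbrs l H u}

theorem card_partners_le (hl : 3 ≤ l) (h3 : ∀ e ∈ H, #e = 3)
    (hk : ∀ X Y, IsExtender l H X Y → #X ≤ k) (c : α) : #(partners l H c) ≤ 3 * k + 1 := by
  obtain ⟨P, hP, hcover⟩ := exists_petal_cover h3 hk (v := c)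
    (F := {e ∈ H | ∃ u t, e = {c, u, t} ∧ t ∈ fatNbrs l H u}) (filter_subset _ H)
    (fun f hf => by obtain ⟨-, u, t, rfl, -⟩ := mem_filter.1 hf; simp)
  set X := partners l H c \ insert c P
  have hX : ∀ u ∈ X, ∃ t ∈ P, {c, u, t} ∈ H ∧ t ∈ fatNbrs l H u := by
    intro u hu
    simp only [X, partners, mem_sdiff, mem_filter_univ, mem_insert, not_or] at hu
    obtain ⟨⟨t, htH, ht⟩, -, huP⟩ := hu
    obtain ⟨x, hxP, hx, hxc⟩ := hcover {c, u, t} (mem_filter.2 ⟨htH, u, t, rfl, ht⟩)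
    simp only [mem_insert, mem_singleton] at hx
    rcases hx with rfl | rfl | rfl
    · exact absurd rfl hxc
    · exact absurd hxP huP
    · exact ⟨x, hxP, htH, ht⟩
  have hXk : #X ≤ k := by
    by_cases hcard : #(insert c P) ≤ 2 * #X
    · exact hk _ _ (isExtender_of_forall_exists_fat hl h3 sdiff_disjoint hX hcard)
    · have := card_insert_le c P; omega
  have : #(partners l H c) ≤ #X + #(insert c P) := card_le_card_sdiff_add_card
  have := card_insert_le c P
  omega

def fatPairs (l : ℕ) (H : Finset (Finset α)) : Finset (Finset α) :=
  univ.biUnion fun v => (fatNbrs l H v).image fun x => {v, x}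

theorem card_fatPairs_le : #(fatPairs l H) ≤ ∑ v, #(fatNbrs l H v) :=
  card_biUnion_le.trans (sum_le_sum fun _ _ => card_image_le)

theorem pair_mem_fatPairs {a b : α} : {a, b} ∈ fatPairs l H ↔ b ∈ fatNbrs l H a := by
  refine ⟨fun h => ?_, fun h => mem_biUnion.2 ⟨a, mem_univ a, mem_image_of_mem _ h⟩⟩
  obtain ⟨v, -, x, hx, hvx⟩ := by simpa only [fatPairs, mem_biUnion, mem_image] using h
  have ha : a ∈ ({v, x} : Finset α) := hvx ▸ mem_insert_self a {b}
  have hb : b ∈ ({v, x} : Finset α) := hvx ▸ mem_insert_of_mem (mem_singleton_self b)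
  have hv : v ∈ ({a, b} : Finset α) := hvx ▸ mem_insert_self v {x}
  have hx' : x ∈ ({a, b} : Finset α) := hvx ▸ mem_insert_of_mem (mem_singleton_self x)
  simp only [mem_insert, mem_singleton] at ha hb hv hx'
  have := @mem_fatNbrs_comm _ _ _ H l
  grind

theorem card_eq_two_of_mem_fatPairs (h3 : ∀ e ∈ H, #e = 3) (hl : 0 < l) {p : Finset α}
    (hp : p ∈ fatPairs l H) : #p = 2 := by
  obtain ⟨v, -, x, hx, rfl⟩ := by simpa only [fatPairs, mem_biUnion, mem_image] using hp
  exact card_pair fun h => notMem_fatNbrs_self h3 hl v (h ▸ hx)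

theorem containsUniformLooseCycle_of_isCycleIn (hl : 3 ≤ l) (h3 : ∀ e ∈ H, #e = 3) {g : ℕ → α}
    (hg : IsCycleIn (fatPairs l H) l g) : ContainsUniformLooseCycle 3 l (H : Set (Finset α)) := by
  have : Nonempty α := ⟨g 0⟩
  obtain ⟨w, hw, hwL⟩ := exists_injOn_forall_mem_sdiff
    (fun i => ({w | {g i, g ((i + 1) % l), w} ∈ H} : Finset α)) ((range l).image g) l
    fun i hi => by
      have := card_image_le (s := range l) (f := g)
      have hfat := pair_mem_fatPairs.1 (hg.2 i hi)
      simp only [fatNbrs, mem_filter_univ] at hfat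
      rw [card_range] at this
      exact (Nat.add_le_add_right this l).trans (by rw [codegree] at hfat; omega)
  simp only [mem_sdiff, mem_filter_univ, mem_image, mem_range, not_exists, not_and] at hwL
  exact ⟨_, isLooseCycleOn_of_injOn hl hg.1 hw fun i hi j hj h => (hwL i hi).2 j hj h.symm,
    fun i hi => h3 _ (hwL i hi).1, fun i hi => (hwL i hi).1⟩

theorem card_triangles_fatPairs_le (hl : 3 ≤ l) (h3 : ∀ e ∈ H, #e = 3)
    (hfree : ¬ContainsUniformLooseCycle 3 l (H : Set (Finset α))) :
    #(triangles (fatPairs l H)) ≤ (l - 3) * #(fatPairs l H) :=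
  card_triangles_le (fun _ hp => card_eq_two_of_mem_fatPairs h3 (by omega) hp) (by omega)
    fun _ hg => hfree (containsUniformLooseCycle_of_isCycleIn hl h3 hg)

theorem insert_insert_mem_triangles_fatPairs (h3 : ∀ e ∈ H, #e = 3) (hl : 0 < l) {v x w : α}
    (hx : x ∈ fatNbrs l H v) (hw : w ∈ fatNbrs l H v) (hwx : w ∈ fatNbrs l H x) :
    {v, x, w} ∈ triangles (fatPairs l H) := by
  have hne := notMem_fatNbrs_self h3 hl (H := H)
  have hcomm := @mem_fatNbrs_comm _ _ _ H l
  simp only [triangles, mem_filter_univ]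
  refine ⟨card_eq_three.2 ⟨v, x, w, ?_, ?_, ?_, rfl⟩, fun p hp => ?_⟩
  · rintro rfl; exact hne v hx
  · rintro rfl; exact hne v hw
  · rintro rfl; exact hne x hwx
  obtain ⟨hpt, hp2⟩ := mem_powersetCard.1 hp
  obtain ⟨a, b, hab, rfl⟩ := card_eq_two.1 hp2
  have ha := hpt (mem_insert_self a {b})
  have hb := hpt (mem_insert_of_mem (mem_singleton_self b))
  simp only [mem_insert, mem_singleton] at ha hb
  rw [pair_mem_fatPairs]
  grind

def fatTriples (l : ℕ) (H : Finset (Finset α)) : Finset (α × α × α) :=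
  {p | p.2.1 ∈ fatNbrs l H p.1 ∧ {p.1, p.2.1, p.2.2} ∈ H}

theorem card_fatTriples : #(fatTriples l H) = ∑ v, ∑ x ∈ fatNbrs l H v, codegree H v x := by
  simp only [fatTriples, codegree, card_filter, Fintype.sum_prod_type, ite_and, sum_ite_irrel,
    sum_const_zero]
  refine sum_congr rfl fun v _ => ?_
  rw [← sum_filter, filter_mem_eq_inter, univ_inter]

theorem card_filter_fatTriples_le :
    #{p ∈ fatTriples l H | p.2.2 ∉ fatNbrs l H p.1} ≤ 2 * l * ∑ c, #(partners l H c) := by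
  set T := {p ∈ fatTriples l H | p.2.2 ∉ fatNbrs l H p.1}
  have hfib : ∀ q ∈ T.image (fun p : α × α × α => (p.1, p.2.2)),
      #{p ∈ T | (p.1, p.2.2) = q} ≤ 2 * l := by
    intro q hq
    obtain ⟨⟨v, x, w⟩, hp, rfl⟩ := mem_image.1 hq
    simp only [T, fatTriples, fatNbrs, mem_filter, mem_univ, true_and, not_le] at hp
    calc #{p ∈ T | (p.1, p.2.2) = (v, w)}
        ≤ #(({y | {v, w, y} ∈ H} : Finset α).image fun y => (v, y, w)) := by
          refine card_le_card fun p hp' => ?_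
          obtain ⟨v', y, w'⟩ := p
          simp only [T, fatTriples, mem_filter, mem_univ, true_and, Prod.mk.injEq] at hp'
          obtain ⟨⟨⟨-, hyH⟩, -⟩, rfl, rfl⟩ := hp'
          exact mem_image.2 ⟨y, by simpa [pair_comm] using hyH, rfl⟩
      _ ≤ codegree H v w := card_image_le
      _ ≤ 2 * l := hp.2.le
  have himg : T.image (fun p : α × α × α => (p.1, p.2.2)) ⊆
      univ.biUnion fun c => (partners l H c).image fun u => (u, c) := by
    intro q hq
    obtain ⟨⟨v, x, w⟩, hp, rfl⟩ := mem_image.1 hq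
    simp only [T, fatTriples, mem_filter, mem_univ, true_and] at hp
    refine mem_biUnion.2 ⟨w, mem_univ w, mem_image.2 ⟨v, ?_, rfl⟩⟩
    simp only [partners, mem_filter_univ]
    have hrot : ({v, x, w} : Finset α) = {w, v, x} := by rw [pair_comm x w, insert_comm v w]
    exact ⟨x, hrot ▸ hp.1.2, hp.1.1⟩
  exact (card_le_mul_card_image T (2 * l) hfib).trans (Nat.mul_le_mul_left _
    ((card_le_card himg).trans (card_biUnion_le.trans (sum_le_sum fun _ _ => card_image_le))))

theorem card_filter_fatTriples_le_card_filter :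
    #{p ∈ fatTriples l H | p.2.2 ∉ fatNbrs l H p.2.1} ≤
      #{p ∈ fatTriples l H | p.2.2 ∉ fatNbrs l H p.1} := by
  refine (card_le_card fun p hp => ?_).trans
    (card_image_le (f := fun p : α × α × α => (p.2.1, p.1, p.2.2)))
  obtain ⟨v, x, w⟩ := p
  simp only [fatTriples, mem_filter, mem_univ, true_and, mem_image, Prod.exists,
    Prod.mk.injEq] at hp ⊢
  exact ⟨x, v, w, ⟨⟨mem_fatNbrs_comm.1 hp.1.1, by rw [insert_comm x v]; exact hp.1.2⟩, hp.2⟩,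
    rfl, rfl, rfl⟩

def fatTriangleTriples (l : ℕ) (H : Finset (Finset α)) : Finset (α × α × α) :=
  {p | p.2.1 ∈ fatNbrs l H p.1 ∧ p.2.2 ∈ fatNbrs l H p.1 ∧ p.2.2 ∈ fatNbrs l H p.2.1}

theorem card_fatTriangleTriples_le (h3 : ∀ e ∈ H, #e = 3) (hl : 0 < l) :
    #(fatTriangleTriples l H) ≤ 27 * #(triangles (fatPairs l H)) := by
  set T := fatTriangleTriples l H
  have himg : T.image (fun p : α × α × α => ({p.1, p.2.1, p.2.2} : Finset α)) ⊆
      triangles (fatPairs l H) := by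
    intro t ht
    obtain ⟨⟨v, x, w⟩, hp, rfl⟩ := mem_image.1 ht
    simp only [T, fatTriangleTriples, mem_filter_univ] at hp
    exact insert_insert_mem_triangles_fatPairs h3 hl hp.1 hp.2.1 hp.2.2
  have hfib : ∀ t ∈ T.image (fun p : α × α × α => ({p.1, p.2.1, p.2.2} : Finset α)),
      #{p ∈ T | ({p.1, p.2.1, p.2.2} : Finset α) = t} ≤ 27 := by
    intro t ht
    have ht3 : #t = 3 := by
      have := himg ht
      simp only [triangles, mem_filter_univ] at this
      exact this.1
    calc #{p ∈ T | ({p.1, p.2.1, p.2.2} : Finset α) = t} ≤ #(t ×ˢ t ×ˢ t) := by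
          refine card_le_card fun p hp => ?_
          obtain ⟨-, rfl⟩ := mem_filter.1 hp
          simp
      _ = 27 := by simp [ht3]
  exact (card_le_mul_card_image T 27 hfib).trans (Nat.mul_le_mul_left _ (card_le_card himg))

/-- If `{v, x}` is fat and `{v, x, w} ∈ H`, then either `{v, w}` and `{x, w}` are fat too, or one
of them is thin and its vertex other than `w` is a partner of `w`. -/
theorem card_fatTriples_le (h3 : ∀ e ∈ H, #e = 3) (hl : 0 < l) :
    #(fatTriples l H) ≤ 4 * l * ∑ c, #(partners l H c) + 27 * #(triangles (fatPairs l H)) := by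
  have hsplit : fatTriples l H ⊆ {p ∈ fatTriples l H | p.2.2 ∉ fatNbrs l H p.1} ∪
      {p ∈ fatTriples l H | p.2.2 ∉ fatNbrs l H p.2.1} ∪
      fatTriangleTriples l H := by
    intro p hp
    simp only [fatTriples, fatTriangleTriples, mem_union, mem_filter, mem_univ, true_and] at hp ⊢
    tauto
  have h₁ := card_filter_fatTriples_le (l := l) (H := H)
  have h₂ := card_filter_fatTriples_le_card_filter (l := l) (H := H)
  have h₃ := card_fatTriangleTriples_le h3 hl
  have := (card_le_card hsplit).trans
    ((card_union_le _ _).trans (Nat.add_le_add_right (card_union_le _ _) _))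
  linarith

theorem three_mul_card_le (hl : 3 ≤ l) (h3 : ∀ e ∈ H, #e = 3)
    (hfree : ¬ContainsUniformLooseCycle 3 l (H : Set (Finset α)))
    (hk : ∀ X Y, IsExtender l H X Y → #X ≤ k) :
    3 * #H ≤ Fintype.card α * l * (43 * k + 4) := by
  set N := Fintype.card α
  have hdeg : ∑ v, #{e ∈ H | v ∈ e} = 3 * #H := by
    calc ∑ v, #{e ∈ H | v ∈ e} = ∑ e ∈ H, #{v | v ∈ e} :=
          sum_card_bipartiteAbove_eq_sum_card_bipartiteBelow fun v e => v ∈ e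
      _ = ∑ e ∈ H, 3 := sum_congr rfl fun e he => by rw [filter_mem_eq_inter, univ_inter, h3 e he]
      _ = 3 * #H := by rw [sum_const, smul_eq_mul, mul_comm]
  have hF : ∑ v, #(fatNbrs l H v) ≤ N * k :=
    (sum_le_sum fun v _ => card_fatNbrs_le hl h3 hk v).trans (by simp [N])
  have hU : ∑ c, #(partners l H c) ≤ N * (3 * k + 1) :=
    (sum_le_sum fun c _ => card_partners_le hl h3 hk c).trans (by simp [N])
  have htri : #(triangles (fatPairs l H)) ≤ l * (N * k) :=
    (card_triangles_fatPairs_le hl h3 hfree).trans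
      (Nat.mul_le_mul (Nat.sub_le l 3) (card_fatPairs_le.trans hF))
  calc 3 * #H = ∑ v, #{e ∈ H | v ∈ e} := hdeg.symm
    _ ≤ ∑ v, (∑ x ∈ fatNbrs l H v, codegree H v x + 4 * l * k) :=
        sum_le_sum fun v _ => card_filter_mem_le_sum_codegree h3 hk v
    _ = #(fatTriples l H) + N * (4 * l * k) := by
        rw [sum_add_distrib, card_fatTriples, sum_const, card_univ, smul_eq_mul]
    _ ≤ 4 * l * (N * (3 * k + 1)) + 27 * (l * (N * k)) + N * (4 * l * k) := by
        gcongr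
        exact (card_fatTriples_le h3 (by omega)).trans (by gcongr)
    _ = N * l * (43 * k + 4) := by ring

end ThreeGraph

end

/-- Every `C_l^3`-free 3-graph of average degree `d` contains an extender `(X, Y)`
with `|X| ≥ d / (24 l²)`. -/
theorem extender_existence {α : Type*} [DecidableEq α] [Fintype α] (l : ℕ)
    (hl : 3 ≤ l) (H : Finset (Finset α)) (h3 : ∀ e ∈ H, e.card = 3)
    (hfree : ¬ ContainsUniformLooseCycle 3 l (↑H : Set (Finset α))) :
    ∃ X Y : Finset α, IsExtender l H X Y ∧
      ((3 * H.card : ℝ) / (Fintype.card α : ℝ)) / (24 * (l : ℝ) ^ 2) ≤ (X.card : ℝ) := by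
  classical
  obtain ⟨⟨X, Y⟩, hXY, hmax⟩ := exists_max_image
    {p : Finset α × Finset α | IsExtender l H p.1 p.2} (fun p => #p.1)
    ⟨(∅, ∅), by simpa using isExtender_of_subsingleton (l := l) (H := H) (X := ∅) (by simp)⟩
  simp only [mem_filter_univ] at hXY hmax
  have hk : ∀ X' Y', IsExtender l H X' Y' → #X' ≤ #X := fun X' Y' h => hmax (X', Y') h
  refine ⟨X, Y, hXY, ?_⟩
  rcases isEmpty_or_nonempty α with hα | hα
  · simp
  obtain ⟨v⟩ := id hα
  have hX : 1 ≤ #X := by simpa using hk {v} ∅ (isExtender_of_subsingleton (by simp))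
  have hcount : 3 * #H ≤ Fintype.card α * (24 * l ^ 2 * #X) := by
    have : 43 * #X + 4 ≤ 24 * l * #X := by nlinarith
    have : l * (43 * #X + 4) ≤ 24 * l ^ 2 * #X := by nlinarith
    calc 3 * #H ≤ Fintype.card α * l * (43 * #X + 4) := three_mul_card_le hl h3 hfree hk
      _ ≤ Fintype.card α * (24 * l ^ 2 * #X) := by rw [mul_assoc]; gcongr
  have hN : (0 : ℝ) < Fintype.card α := by exact_mod_cast Fintype.card_pos
  rw [div_div, div_le_iff₀ (by positivity)]
  exact_mod_cast (by linarith : 3 * #H ≤ #X * (Fintype.card α * (24 * l ^ 2)))
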